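/- arXiv:1304.7957 — 3 statements merged into one kernel-verified Lean document; each statement's English description precedes it below -/
import Mathlib

section
/- For every finite abelian group G, s(G) ≤ |G| + exp(G) - 1, where s(G) is the smallest positive integer d such that every sequence of d elements of G contains a zero-sum subsequence of length exactly exp(G). -/
/-!
Translate the sequence so that `0` is its most frequent term, with multiplicity `h`; we may
assume `h < exp G`. A sequence `S` of length at least `|G|` with multiplicities at most `h` has a
nonempty zero-sum subsequence of length at most `h`. Otherwise write `S` as a set `D` of distinct
terms plus a sequence `S'` with multiplicities at most `h - 1`, and let `Σ_j` be the set of sums of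
at most `j` terms: `0 = 0 + 0` is the only way to write `0` in `({0} ∪ D) + Σ_{h-1}(S')`, so
Scherk's theorem (`|A + B| ≥ |A| + |B| - 1` in that situation) gives `|Σ_h(S)| > |S| ≥ |G|` by
induction on `h`, which is absurd. Extracting such short zero-sum blocks from the nonzero terms
until their total length reaches `exp G - h`, and padding with zeros, gives the subsequence.
Scherk's theorem itself follows by induction on `|B|` via the Dyson e-transform.
-/

open Finset

/-- `D` is the Davenport constant of `G`: the least `d > 0` such that every
sequence (multiset) of `d` elements of `G` has a nonempty zero-sum subsequence. -/
def IsDavenport (G : Type*) [AddCommGroup G] (D : ℕ) : Prop :=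
  IsLeast {d : ℕ | 0 < d ∧ ∀ S : Multiset G, Multiset.card S = d →
    ∃ T, T ≤ S ∧ T ≠ 0 ∧ T.sum = 0} D

/-- `s` is the generalized EGZ invariant `s_m(G)`: the least `d > 0` such that every
sequence of `d` elements of `G` has a zero-sum subsequence of length exactly `m`. -/
def IsEGZConst (G : Type*) [AddCommGroup G] (m s : ℕ) : Prop :=
  IsLeast {d : ℕ | 0 < d ∧ ∀ S : Multiset G, Multiset.card S = d →
    ∃ T, T ≤ S ∧ Multiset.card T = m ∧ T.sum = 0} s

/-- The coloring `c` admits a zero-sum hyperstar: `m` distinct `r`-sets with a common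
vertex whose colors sum to zero. -/
def HasZeroSumStar (G : Type*) [AddCommGroup G] (r m d : ℕ)
    (c : Finset (Fin d) → G) : Prop :=
  ∃ v : Fin d, ∃ F : Finset (Finset (Fin d)), F.card = m ∧
    (∀ e ∈ F, e.card = r ∧ v ∈ e) ∧ ∑ e ∈ F, c e = 0

/-- The coloring `c` admits a zero-sum intersecting family: `m` distinct `r`-sets with
pairwise nonempty intersections whose colors sum to zero. -/
def HasZeroSumIntersecting (G : Type*) [AddCommGroup G] (r m d : ℕ)
    (c : Finset (Fin d) → G) : Prop :=
  ∃ F : Finset (Finset (Fin d)), F.card = m ∧ (∀ e ∈ F, e.card = r) ∧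
    (∀ e ∈ F, ∀ f ∈ F, (e ∩ f).Nonempty) ∧ ∑ e ∈ F, c e = 0

/-- The coloring `c` admits a zero-sum delta-system of type `S(r,q,m)`: `m` distinct
`r`-sets whose pairwise intersections all equal a fixed `q`-set `Q`, with zero color sum. -/
def HasZeroSumDelta (G : Type*) [AddCommGroup G] (r q m d : ℕ)
    (c : Finset (Fin d) → G) : Prop :=
  ∃ Q : Finset (Fin d), Q.card = q ∧ ∃ F : Finset (Finset (Fin d)), F.card = m ∧
    (∀ e ∈ F, e.card = r) ∧ (∀ e ∈ F, ∀ f ∈ F, e ≠ f → e ∩ f = Q) ∧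
    ∑ e ∈ F, c e = 0

/-- `R` is the zero-sum Ramsey number `R(S_m^{(r)}, G)` for hyperstars. -/
def IsStarRamsey (G : Type*) [AddCommGroup G] (r m R : ℕ) : Prop :=
  IsLeast {d : ℕ | 0 < d ∧ ∀ c : Finset (Fin d) → G, HasZeroSumStar G r m d c} R

/-- `R` is the zero-sum Ramsey number `R(I_m^{(r)}, G)` for intersecting families. -/
def IsIntRamsey (G : Type*) [AddCommGroup G] (r m R : ℕ) : Prop :=
  IsLeast {d : ℕ | 0 < d ∧ ∀ c : Finset (Fin d) → G, HasZeroSumIntersecting G r m d c} R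

/-- `R` is the zero-sum Ramsey number `R(S(r,q,m), G)` for delta-systems. -/
def IsDeltaRamsey (G : Type*) [AddCommGroup G] (r q m R : ℕ) : Prop :=
  IsLeast {d : ℕ | 0 < d ∧ ∀ c : Finset (Fin d) → G, HasZeroSumDelta G r q m d c} R

open scoped Pointwise

section

variable {G : Type*} [AddCommGroup G] [DecidableEq G]

theorem scherk_card_add_card_le {A B : Finset G} (hA : 0 ∈ A) (hB : 0 ∈ B)
    (huniq : ∀ a ∈ A, ∀ b ∈ B, a + b = 0 → a = 0) : #A + #B ≤ #(A + B) + 1 := by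
  induction hn : #B using Nat.strong_induction_on generalizing A B with
  | _ n ih =>
  subst hn
  obtain hB0 | ⟨b, hbB, hb0⟩ : B = {0} ∨ ∃ b ∈ B, b ≠ 0 := by
    by_contra! h
    exact h.1 (eq_singleton_iff_unique_mem.2 ⟨hB, h.2⟩)
  · simp [hB0]
  -- Otherwise `A` is not closed under adding `B`: `a ↦ a + b` would permute `A` and hit `0`.
  obtain ⟨e, heA, c, hcB, hecA⟩ : ∃ e ∈ A, ∃ c ∈ B, e + c ∉ A := by
    by_contra! hclosed
    have himage : A.image (· + b) = A :=
      eq_of_subset_of_card_le (image_subset_iff.2 fun a ha => hclosed a ha b hbB)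
        (card_image_of_injective _ (add_left_injective b)).ge
    obtain ⟨a, haA, hab⟩ := mem_image.1 (himage.symm ▸ hA)
    rw [huniq a haA b hbB hab, zero_add] at hab
    exact hb0 hab
  -- The Dyson transform at `e` keeps `#A + #B`, does not enlarge `A + B`, keeps `0` uniquely
  -- represented, and removes `c` from `B`.
  set x := addDysonETransform e (A, B) with hx
  have hx₂ : ∀ y, y ∈ x.2 ↔ y ∈ B ∧ e + y ∈ A := fun y => by
    simp [hx, mem_neg_vadd_finset_iff]
  have hlt : #x.2 < #B := card_lt_card ⟨inter_subset_left, fun hsub => hecA ((hx₂ c).1 (hsub hcB)).2⟩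
  have hx₁ : 0 ∈ x.1 := mem_union_left _ hA
  have hx₂0 : 0 ∈ x.2 := (hx₂ 0).2 ⟨hB, by simpa using heA⟩
  have huniq' : ∀ a ∈ x.1, ∀ y ∈ x.2, a + y = 0 → a = 0 := by
    intro a ha y hy hay
    obtain ⟨hyB, heyA⟩ := (hx₂ y).1 hy
    rcases mem_union.1 ha with haA | hae
    · exact huniq a haA y hyB hay
    · obtain ⟨d, hdB, rfl⟩ := mem_vadd_finset.1 hae
      have hey : e + y = 0 := huniq _ heyA d hdB (by rw [← hay, vadd_eq_add]; abel)
      have hy : y = 0 := by rwa [huniq e heA y hyB hey, zero_add] at hey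
      rwa [hy, add_zero] at hay
  have hcard : #x.1 + #x.2 = #A + #B := addDysonETransform.card e (A, B)
  have hsub : #(x.1 + x.2) ≤ #(A + B) := card_le_card (addDysonETransform.subset e (A, B))
  have := ih _ hlt hx₁ hx₂0 huniq' rfl
  omega

def boundedSubsums (h : ℕ) (S : Multiset G) : Finset G :=
  ((S.powerset.filter fun T => Multiset.card T ≤ h).map Multiset.sum).toFinset

theorem mem_boundedSubsums {h : ℕ} {S : Multiset G} {x : G} :
    x ∈ boundedSubsums h S ↔ ∃ T ≤ S, Multiset.card T ≤ h ∧ T.sum = x := by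
  simp [boundedSubsums, and_assoc]

theorem card_add_one_le_card_boundedSubsums {h : ℕ} {S : Multiset G}
    (hcount : ∀ a, S.count a ≤ h)
    (hfree : ∀ T ≤ S, T ≠ 0 → Multiset.card T ≤ h → T.sum ≠ 0) :
    Multiset.card S + 1 ≤ #(boundedSubsums h S) := by
  induction h generalizing S with
  | zero =>
    have hS : S = 0 := Multiset.eq_zero_of_forall_notMem fun a ha =>
      (Multiset.count_pos.2 ha).ne' (Nat.le_zero.1 (hcount a))
    subst hS
    exact card_pos.2 ⟨0, mem_boundedSubsums.2 ⟨0, le_rfl, le_rfl, rfl⟩⟩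
  | succ h ih =>
    -- Peel off one copy of each element of `S`: the rest has multiplicities at most `h`.
    set S' := S - S.toFinset.val with hS'
    have hsplit : S.toFinset.val + S' = S := add_tsub_cancel_of_le (by simpa using S.dedup_le)
    have hcons : ∀ a ∈ S.toFinset, ∀ T ≤ S', a ::ₘ T ≤ S := fun a ha T hT => by
      rw [← Multiset.singleton_add, ← hsplit]
      exact add_le_add (Multiset.singleton_le.2 ha) hT
    have hS'le : S' ≤ S := tsub_le_self
    have h0 : 0 ∉ S.toFinset := fun h0 =>
      hfree {0} (Multiset.singleton_le.2 (Multiset.mem_toFinset.1 h0)) (by simp) (by simp) (by simp)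
    have hcount' : ∀ a, S'.count a ≤ h := fun a => by
      rw [hS', Multiset.count_sub, Multiset.toFinset_val, Multiset.count_dedup]
      split_ifs with ha
      · exact Nat.sub_le_of_le_add (hcount a)
      · simp [Multiset.count_eq_zero_of_notMem ha]
    have ih' := ih hcount'
      (fun T hT hT0 hTh => hfree T (hT.trans hS'le) hT0 (by omega))
    have huniq : ∀ a ∈ insert 0 S.toFinset, ∀ x ∈ boundedSubsums h S', a + x = 0 → a = 0 := by
      intro a ha x hx hax
      obtain ⟨T, hT, hTh, rfl⟩ := mem_boundedSubsums.1 hx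
      rcases mem_insert.1 ha with rfl | ha
      · rfl
      · exact absurd (by simpa using hax) (hfree _ (hcons a ha T hT) (by simp) (by simpa using hTh))
    have hscherk := scherk_card_add_card_le (mem_insert_self 0 S.toFinset)
      (mem_boundedSubsums.2 ⟨0, Multiset.zero_le _, Nat.zero_le _, rfl⟩) huniq
    have hsub : insert 0 S.toFinset + boundedSubsums h S' ⊆ boundedSubsums (h + 1) S := by
      intro y hy
      obtain ⟨a, ha, x, hx, rfl⟩ := mem_add.1 hy
      obtain ⟨T, hT, hTh, rfl⟩ := mem_boundedSubsums.1 hx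
      rw [mem_boundedSubsums]
      rcases mem_insert.1 ha with rfl | ha
      · exact ⟨T, hT.trans hS'le, by omega, (zero_add _).symm⟩
      · exact ⟨a ::ₘ T, hcons a ha T hT, by simpa using hTh, by simp⟩
    have hcardS := congrArg Multiset.card hsplit
    rw [Multiset.card_add, card_val] at hcardS
    rw [card_insert_of_notMem h0] at hscherk
    have := card_le_card hsub
    omega

theorem exists_zero_sum_card_le_of_count_le [Fintype G] {h : ℕ} {S : Multiset G}
    (hcount : ∀ a, S.count a ≤ h) (hS : Fintype.card G ≤ Multiset.card S) :
    ∃ T ≤ S, T ≠ 0 ∧ Multiset.card T ≤ h ∧ T.sum = 0 := by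
  by_contra! hfree
  have := card_add_one_le_card_boundedSubsums hcount hfree
  have := card_le_univ (boundedSubsums h S)
  omega

theorem exists_zero_sum_card_le_le_card_add [Fintype G] {h : ℕ} (k : ℕ) {S : Multiset G}
    (hcount : ∀ a, S.count a ≤ h) (hS : Fintype.card G + k ≤ Multiset.card S + h + 1) :
    ∃ U ≤ S, U.sum = 0 ∧ Multiset.card U ≤ k ∧ k ≤ Multiset.card U + h := by
  induction k using Nat.strong_induction_on generalizing S with
  | _ k ih =>
  by_cases hk : k ≤ h
  · exact ⟨0, Multiset.zero_le _, rfl, Nat.zero_le _, by simpa using hk⟩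
  obtain ⟨T, hTS, hT0, hTh, hTsum⟩ := exists_zero_sum_card_le_of_count_le hcount (by omega)
  have hT : 0 < Multiset.card T := Multiset.card_pos.2 hT0
  have hcardST : Multiset.card (S - T) + Multiset.card T = Multiset.card S := by
    rw [← Multiset.card_add, tsub_add_cancel_of_le hTS]
  obtain ⟨U, hUS, hUsum, hUk, hkU⟩ := ih (k - Multiset.card T) (by omega) (S := S - T)
    (fun a => (Multiset.count_le_of_le a tsub_le_self).trans (hcount a)) (by omega)
  refine ⟨U + T, (le_tsub_iff_right hTS).1 hUS, by simp [hUsum, hTsum], ?_, ?_⟩ <;>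
    rw [Multiset.card_add] <;> omega

theorem exists_zero_sum_card_eq_of_count_le_count_zero [Fintype G] (k : ℕ) {S : Multiset G}
    (hmax : ∀ a, S.count a ≤ S.count 0) (hS : Fintype.card G + k ≤ Multiset.card S + 1) :
    ∃ T ≤ S, Multiset.card T = k ∧ T.sum = 0 := by
  set S₁ := S.filter (fun a => ¬a = 0)
  have hsplit : Multiset.replicate (S.count 0) 0 + S₁ = S := by
    rw [← Multiset.filter_eq', Multiset.filter_add_not]
  have hcount : ∀ a, S₁.count a ≤ S.count 0 := fun a => by
    rw [Multiset.count_filter]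
    split_ifs
    exacts [Nat.zero_le _, hmax a]
  have hcardS := congrArg Multiset.card hsplit
  rw [Multiset.card_add, Multiset.card_replicate] at hcardS
  obtain ⟨U, hUS, hUsum, hUk, hkU⟩ := exists_zero_sum_card_le_le_card_add k hcount (by omega)
  refine ⟨Multiset.replicate (k - Multiset.card U) 0 + U, ?_, ?_, by simp [hUsum]⟩
  · rw [← hsplit]
    exact add_le_add ((Multiset.replicate_le_replicate 0).2 (by omega)) hUS
  · rw [Multiset.card_add, Multiset.card_replicate]
    omega

theorem exists_zero_sum_card_eq_exponent [Fintype G] {S : Multiset G}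
    (hS : Fintype.card G + AddMonoid.exponent G ≤ Multiset.card S + 1) :
    ∃ T ≤ S, Multiset.card T = AddMonoid.exponent G ∧ T.sum = 0 := by
  obtain ⟨g, -, hg⟩ := exists_max_image univ (S.count ·) univ_nonempty
  have hmax : ∀ a, (S.map (· - g)).count a ≤ (S.map (· - g)).count 0 := fun a => by
    have hcount : ∀ b, (S.map (· - g)).count (b - g) = S.count b := fun b =>
      Multiset.count_map_eq_count' _ _ sub_left_injective b
    simpa [← hcount] using hg (a + g) (mem_univ _)
  obtain ⟨T, hTS, hTcard, hTsum⟩ :=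
    exists_zero_sum_card_eq_of_count_le_count_zero _ hmax (by rwa [Multiset.card_map])
  refine ⟨T.map (· + g), ?_, by simpa using hTcard, ?_⟩
  · simpa [Multiset.map_map] using Multiset.map_le_map (f := (· + g)) hTS
  · simp [Multiset.sum_map_add, hTsum, hTcard, AddMonoid.exponent_nsmul_eq_zero]

end

/-- `s(G) ≤ |G| + exp(G) - 1`. -/
theorem stmt_4 (G : Type*) [AddCommGroup G] [Fintype G] (s : ℕ)
    (hs : IsEGZConst G (AddMonoid.exponent G) s) :
    s ≤ Fintype.card G + AddMonoid.exponent G - 1 := by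
  classical
  have hcard : 0 < Fintype.card G := Fintype.card_pos
  have hexp : 0 < AddMonoid.exponent G := Nat.pos_of_ne_zero AddMonoid.exponent_ne_zero_of_finite
  exact hs.2 ⟨by omega, fun S hS => exists_zero_sum_card_eq_exponent (by omega)⟩
end

section
/- Let m ≥ t ≥ 2 be positive integers with t | m. Then the zero-sum Ramsey number R(K_{1,m}, Z_t) equals m + t - 1 if both m and t are even, and equals m + t otherwise. -/
/-!
Upper bounds. At a vertex of `K_d` with `d ≥ m + t`, the `d - 1 ≥ m + t - 1` incident colours
contain, by iterating Erdős–Ginzburg–Ziv, `m` colours summing to zero. When `t = 2s` is even and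
`d = m + t - 1`, suppose some vertex sees an even number of odd colours. Its `m + t - 2` colours
can then be split into pairs of equal parity; the halves of the pair sums, read in `ℤ/s`, contain
`m / 2` values summing to zero by EGZ, and the corresponding `m` colours sum to zero in `ℤ/t`.
So without a zero-sum star every vertex has odd degree in the graph of odd-coloured edges, which
the handshake lemma forbids on the odd number `m + t - 1` of vertices.

Lower bounds. Colour the edges of a `(t - 1)`-regular graph on `D ≤ m + t - 1` vertices by `1` and
all other edges by `0`. An `m`-star has at most `t - 1` edges coloured `1` and at most
`D - t ≤ m - 1` edges coloured `0`, so its sum lies strictly between `0` and `t`. A circulant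
graph provides such a regular graph for `D = m + t - 1` when `t` is odd and for `D = m + t - 2`
when `t` is even.
-/

open Finset

lemma Finset.pair_right_injective {α : Type*} [DecidableEq α] (v : α) :
    Function.Injective fun w : α => ({v, w} : Finset α) := by
  intro w w' (h : ({v, w} : Finset α) = {v, w'})
  have hw : w ∈ ({v, w'} : Finset α) := h ▸ mem_insert_of_mem (mem_singleton_self w)
  have hw' : w' ∈ ({v, w} : Finset α) := h ▸ mem_insert_of_mem (mem_singleton_self w')
  simp only [mem_insert, mem_singleton] at hw hw'
  grind

theorem ZMod.erdos_ginzburg_ziv_mul {ι : Type*} [DecidableEq ι] {n : ℕ} (k : ℕ) {s : Finset ι}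
    (a : ι → ZMod n) (hs : k * n + (n - 1) ≤ #s) :
    ∃ t ⊆ s, #t = k * n ∧ ∑ i ∈ t, a i = 0 := by
  induction k generalizing s with
  | zero => exact ⟨∅, empty_subset _, by simp⟩
  | succ k ih =>
    rw [add_one_mul] at hs
    obtain ⟨t₁, ht₁s, ht₁, hsum₁⟩ := ZMod.erdos_ginzburg_ziv a (s := s) (by omega)
    obtain ⟨t₂, ht₂s, ht₂, hsum₂⟩ := ih (s := s \ t₁) (by rw [card_sdiff_of_subset ht₁s]; omega)
    have hdisj : Disjoint t₂ t₁ := sdiff_disjoint.mono_left ht₂s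
    refine ⟨t₂ ∪ t₁, union_subset (ht₂s.trans sdiff_subset) ht₁s, ?_, ?_⟩
    · rw [card_union_of_disjoint hdisj, ht₁, ht₂, add_one_mul]
    · rw [sum_union hdisj, hsum₁, hsum₂, add_zero]

lemma Finset.exists_pairwiseDisjoint_pairs {ι : Type*} [DecidableEq ι] (p : ι → Prop)
    [DecidablePred p] (s : Finset ι) (hp : Even #{i ∈ s | p i}) :
    ∃ P : Finset (Finset ι), (P : Set (Finset ι)).PairwiseDisjoint id ∧
      (∀ e ∈ P, e ⊆ s ∧ #e = 2 ∧ ∀ i ∈ e, ∀ j ∈ e, (p i ↔ p j)) ∧ #s ≤ 2 * #P + 1 := by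
  induction s using Finset.strongInduction with
  | H s ih =>
  by_cases hs : #s ≤ 1
  · exact ⟨∅, by simp, by simp, by simpa using hs⟩
  obtain ⟨x, hx, y, hy, hxy, hpxy⟩ : ∃ x ∈ s, ∃ y ∈ s, x ≠ y ∧ (p x ↔ p y) := by
    by_cases h2 : 2 ≤ #{i ∈ s | p i}
    · obtain ⟨x, hx, y, hy, hxy⟩ := one_lt_card.1 h2
      simp only [mem_filter] at hx hy
      exact ⟨x, hx.1, y, hy.1, hxy, iff_of_true hx.2 hy.2⟩
    · have hnone : ∀ i ∈ s, ¬ p i := by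
        obtain ⟨r, hr⟩ := hp
        simpa using (show #{i ∈ s | p i} = 0 by omega)
      obtain ⟨x, hx, y, hy, hxy⟩ := one_lt_card.1 (by omega : 1 < #s)
      exact ⟨x, hx, y, hy, hxy, iff_of_false (hnone x hx) (hnone y hy)⟩
  set s' := (s.erase x).erase y
  have hs' : #s' + 2 = #s := by
    rw [card_erase_of_mem (mem_erase.2 ⟨hxy.symm, hy⟩), card_erase_of_mem hx]; omega
  have hp' : Even #{i ∈ s' | p i} := by
    rw [filter_erase, filter_erase]
    by_cases hpx : p x
    · have hpy : p y := hpxy.1 hpx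
      rw [card_erase_of_mem (by simp [hxy.symm, hy, hpy]), card_erase_of_mem (by simp [hx, hpx])]
      obtain ⟨r, hr⟩ := hp
      exact ⟨r - 1, by omega⟩
    · have hpy : ¬ p y := hpxy.not.1 hpx
      rwa [erase_eq_of_notMem (by simp [hpy]), erase_eq_of_notMem (by simp [hpx])]
  obtain ⟨P, hdisj, hP, hcard⟩ :=
    ih s' ((erase_ssubset (mem_erase.2 ⟨hxy.symm, hy⟩)).trans_subset (erase_subset x s)) hp'
  have hxyP : ∀ e ∈ P, Disjoint {x, y} e := fun e he => by
    have := (hP e he).1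
    rw [disjoint_left]
    simp only [mem_insert, mem_singleton]
    rintro i (rfl | rfl) hi <;> simpa [s'] using this hi
  have hnotin : {x, y} ∉ P := fun h => by simpa using hxyP _ h
  refine ⟨insert {x, y} P, by rw [coe_insert]; exact hdisj.insert fun e he _ => hxyP e he, ?_, ?_⟩
  · intro e he
    rcases mem_insert.1 he with rfl | he
    · exact ⟨by simp [insert_subset_iff, hx, hy], card_pair hxy, by simp [hpxy]⟩
    · obtain ⟨hes, he2, hep⟩ := hP e he
      exact ⟨hes.trans ((erase_subset _ _).trans (erase_subset _ _)), he2, hep⟩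
  · rw [card_insert_of_notMem hnotin]
    omega

lemma ZMod.even_val_add {n : ℕ} [NeZero n] (hn : Even n) {a b : ZMod n}
    (h : Odd a.val ↔ Odd b.val) : Even (a + b).val := by
  rw [ZMod.val_add]
  refine Even.mod_even (Nat.even_add.2 ?_) hn
  simpa only [Nat.not_odd_iff_even] using h.not

theorem ZMod.erdos_ginzburg_ziv_two_mul_of_even_card_odd {ι : Type*} [DecidableEq ι] {s : ℕ}
    [NeZero s] (k : ℕ) {A : Finset ι} (f : ι → ZMod (2 * s))
    (hodd : Even #{i ∈ A | Odd (f i).val}) (hA : 2 * (k * s + (s - 1)) ≤ #A) :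
    ∃ F ⊆ A, #F = 2 * (k * s) ∧ ∑ i ∈ F, f i = 0 := by
  obtain ⟨P, hdisj, hP, hcard⟩ := exists_pairwiseDisjoint_pairs (fun i => Odd (f i).val) A hodd
  have heven : ∀ e ∈ P, Even (∑ i ∈ e, f i).val := by
    intro e he
    obtain ⟨-, he2, hep⟩ := hP e he
    obtain ⟨x, y, hxy, rfl⟩ := card_eq_two.1 he2
    rw [sum_pair hxy]
    exact ZMod.even_val_add (even_two_mul s) (hep x (by simp) y (by simp))
  obtain ⟨K, hKP, hK, hKsum⟩ := ZMod.erdos_ginzburg_ziv_mul k (s := P)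
    (fun e => (((∑ i ∈ e, f i).val / 2 : ℕ) : ZMod s)) (by omega)
  have hKdisj := hdisj.subset (coe_subset.2 hKP)
  refine ⟨K.biUnion id, biUnion_subset.2 fun e he => (hP e (hKP he)).1, ?_, ?_⟩
  · rw [card_biUnion hKdisj]
    dsimp only [id]
    rw [sum_congr rfl fun e he => (hP e (hKP he)).2.1, sum_const, hK, smul_eq_mul, mul_comm]
  · have hhalf : ∀ e ∈ K, ∑ i ∈ e, f i = ((2 * ((∑ i ∈ e, f i).val / 2) : ℕ) : ZMod (2 * s)) :=
      fun e he => by rw [Nat.two_mul_div_two_of_even (heven e (hKP he)), ZMod.natCast_zmod_val]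
    rw [sum_biUnion hKdisj]
    dsimp only [id]
    rw [sum_congr rfl hhalf, ← Nat.cast_sum, ← mul_sum, ZMod.natCast_eq_zero_iff]
    rw [← Nat.cast_sum, ZMod.natCast_eq_zero_iff] at hKsum
    exact mul_dvd_mul_left 2 hKsum

lemma exists_finset_nat_reflection_closed {k D : ℕ} (hk : k < D) (hkD : Even (k * D)) :
    ∃ T : Finset ℕ, (∀ i ∈ T, 0 < i ∧ i < D ∧ D - i ∈ T) ∧ #T = k := by
  obtain ⟨h, hkh⟩ := Nat.even_or_odd' k
  have hdisj : Disjoint (Icc 1 h) (Icc (D - h) (D - 1)) :=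
    disjoint_left.2 fun i hi hi' => by simp only [mem_Icc] at hi hi'; omega
  have hcard : #(Icc 1 h ∪ Icc (D - h) (D - 1)) = 2 * h := by
    rw [card_union_of_disjoint hdisj, Nat.card_Icc, Nat.card_Icc]; omega
  rcases hkh with rfl | rfl
  · refine ⟨Icc 1 h ∪ Icc (D - h) (D - 1), fun i hi => ?_, hcard⟩
    simp only [mem_union, mem_Icc] at hi ⊢
    omega
  · have hD : Even D := (Nat.even_mul.1 hkD).resolve_left (by simp)
    rw [Nat.even_iff] at hD
    refine ⟨insert (D / 2) (Icc 1 h ∪ Icc (D - h) (D - 1)), fun i hi => ?_, ?_⟩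
    · simp only [mem_insert, mem_union, mem_Icc] at hi ⊢
      omega
    · rw [card_insert_of_notMem (by simp only [mem_union, mem_Icc]; omega), hcard]

lemma SimpleGraph.circulantGraph_isRegularOfDegree {G : Type*} [AddGroup G] [Fintype G]
    [DecidableEq G] {S : Finset G} (hS : ∀ x ∈ S, -x ∈ S) (h0 : 0 ∉ S) :
    (circulantGraph (S : Set G)).IsRegularOfDegree #S := by
  intro v
  have hadj : ∀ w, (circulantGraph (S : Set G)).Adj v w ↔ w - v ∈ S := fun w => by
    rw [circulantGraph_adj, mem_coe, mem_coe]
    refine ⟨fun ⟨_, h⟩ => h.elim (fun h => by simpa using hS _ h) id, fun h => ⟨?_, Or.inr h⟩⟩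
    rintro rfl
    exact h0 (by simpa using h)
  rw [← card_neighborFinset_eq_degree, ← card_map (Equiv.addRight v).toEmbedding (s := S)]
  congr 1
  ext w
  rw [mem_neighborFinset, hadj, mem_map_equiv]
  simp [sub_eq_add_neg]

open Fin.NatCast in
lemma SimpleGraph.exists_isRegularOfDegree {k D : ℕ} (hk : k < D) (hkD : Even (k * D)) :
    ∃ (G : SimpleGraph (Fin D)) (_ : DecidableRel G.Adj), G.IsRegularOfDegree k := by
  have : NeZero D := ⟨by omega⟩
  obtain ⟨T, hT, hTcard⟩ := exists_finset_nat_reflection_closed hk hkD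
  have hinj : Set.InjOn (Nat.cast : ℕ → Fin D) T := fun i hi j hj h => by
    simpa [Fin.ext_iff, Fin.val_natCast, Nat.mod_eq_of_lt (hT i hi).2.1,
      Nat.mod_eq_of_lt (hT j hj).2.1] using h
  refine ⟨circulantGraph (T.image (Nat.cast : ℕ → Fin D) : Set (Fin D)), inferInstance, ?_⟩
  rw [← hTcard, ← card_image_of_injOn hinj]
  refine circulantGraph_isRegularOfDegree (fun x hx => ?_) fun h => ?_
  · obtain ⟨i, hi, rfl⟩ := mem_image.1 hx
    refine mem_image.2 ⟨D - i, (hT i hi).2.2, eq_neg_of_add_eq_zero_left ?_⟩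
    rw [← Nat.cast_add, Nat.sub_add_cancel (hT i hi).2.1.le, Fin.natCast_self]
  · obtain ⟨i, hi, hi0⟩ := mem_image.1 h
    rw [Fin.natCast_eq_zero] at hi0
    exact (hT i hi).2.1.not_ge (Nat.le_of_dvd (hT i hi).1 hi0)

section Stars

variable {G : Type*} [AddCommGroup G]

lemma hasZeroSumStar_two_iff {m d : ℕ} (c : Finset (Fin d) → G) :
    HasZeroSumStar G 2 m d c ↔
      ∃ v W, v ∉ W ∧ #W = m ∧ ∑ w ∈ W, c {v, w} = 0 := by
  constructor
  · rintro ⟨v, F, hcard, hF, hsum⟩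
    set W := (univ.erase v).filter (fun w => {v, w} ∈ F)
    have hinj := (pair_right_injective v).injOn (s := ↑W)
    have himage : W.image (fun w => {v, w}) = F := by
      ext e
      simp only [W, mem_image, mem_filter, mem_erase, mem_univ, and_true]
      refine ⟨by rintro ⟨w, ⟨-, hw⟩, rfl⟩; exact hw, fun he => ?_⟩
      obtain ⟨x, y, hxy, rfl⟩ := card_eq_two.1 (hF _ he).1
      rcases mem_insert.1 (hF _ he).2 with rfl | hv
      · exact ⟨y, ⟨hxy.symm, he⟩, rfl⟩
      · obtain rfl := mem_singleton.1 hv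
        exact ⟨x, ⟨hxy, pair_comm x v ▸ he⟩, pair_comm _ _⟩
    refine ⟨v, W, by simp [W], ?_, ?_⟩
    · rw [← card_image_of_injOn hinj, himage, hcard]
    · rw [← sum_image hinj, himage, hsum]
  · rintro ⟨v, W, hvW, hcard, hsum⟩
    have hinj := (pair_right_injective v).injOn (s := ↑W)
    refine ⟨v, W.image (fun w => {v, w}), by rw [card_image_of_injOn hinj, hcard], ?_,
      by rwa [sum_image hinj]⟩
    rintro _ he
    obtain ⟨w, hw, rfl⟩ := mem_image.1 he
    exact ⟨card_pair (ne_of_mem_of_not_mem hw hvW).symm, mem_insert_self _ _⟩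

lemma hasZeroSumStar_of_le {r m d D : ℕ} (hdD : d ≤ D)
    (h : ∀ c : Finset (Fin d) → G, HasZeroSumStar G r m d c) (c : Finset (Fin D) → G) :
    HasZeroSumStar G r m D c := by
  let ι : Fin d ↪ Fin D := Fin.castLEEmb hdD
  obtain ⟨v, F, hcard, hF, hsum⟩ := h (fun e => c (e.map ι))
  have hinj : Function.Injective (fun e : Finset (Fin d) => e.map ι) := map_injective ι
  refine ⟨ι v, F.image (fun e => e.map ι), by rw [card_image_of_injective _ hinj, hcard], ?_,
    by rwa [sum_image hinj.injOn]⟩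
  simp only [mem_image, forall_exists_index, and_imp, forall_apply_eq_imp_iff₂, card_map,
    mem_map']
  exact hF

lemma isStarRamsey_of_forall_of_exists_not {r m N : ℕ} (hN : 0 < N)
    (h : ∀ c : Finset (Fin N) → G, HasZeroSumStar G r m N c)
    (h' : ∃ c : Finset (Fin (N - 1)) → G, ¬ HasZeroSumStar G r m (N - 1) c) :
    IsStarRamsey G r m N := by
  refine ⟨⟨hN, h⟩, fun d ⟨_, hd⟩ => ?_⟩
  by_contra! hlt
  obtain ⟨c, hc⟩ := h'
  exact hc (hasZeroSumStar_of_le (by omega) hd c)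

end Stars

lemma hasZeroSumStar_of_add_le {m t d : ℕ} (ht : 0 < t) (hdvd : t ∣ m) (hd : m + t ≤ d)
    (c : Finset (Fin d) → ZMod t) : HasZeroSumStar (ZMod t) 2 m d c := by
  obtain ⟨k, rfl⟩ := hdvd
  have v : Fin d := ⟨0, by omega⟩
  have hcard : k * t + (t - 1) ≤ #(univ.erase v) := by
    rw [card_erase_of_mem (mem_univ v), card_univ, Fintype.card_fin, mul_comm]
    omega
  obtain ⟨W, hW, hWcard, hsum⟩ := ZMod.erdos_ginzburg_ziv_mul k (fun w => c {v, w}) hcard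
  exact (hasZeroSumStar_two_iff c).2
    ⟨v, W, fun h => (mem_erase.1 (hW h)).1 rfl, by rw [hWcard, mul_comm], hsum⟩

lemma odd_card_odd_of_not_hasZeroSumStar {m t : ℕ} (ht : Even t) (ht0 : 0 < t) (hdvd : t ∣ m)
    {c : Finset (Fin (m + t - 1)) → ZMod t} (hc : ¬ HasZeroSumStar (ZMod t) 2 m (m + t - 1) c)
    (v : Fin (m + t - 1)) : Odd #{w ∈ univ.erase v | Odd (c {v, w}).val} := by
  obtain ⟨s, rfl⟩ := even_iff_two_dvd.1 ht
  obtain ⟨k, rfl⟩ := hdvd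
  have : NeZero s := ⟨by omega⟩
  by_contra heven
  obtain ⟨W, hW, hWcard, hsum⟩ := ZMod.erdos_ginzburg_ziv_two_mul_of_even_card_odd k
    (A := univ.erase v) (fun w => c {v, w}) (Nat.not_odd_iff_even.1 heven)
    (by rw [card_erase_of_mem (mem_univ v), card_univ, Fintype.card_fin]; ring_nf; omega)
  exact hc ((hasZeroSumStar_two_iff c).2
    ⟨v, W, fun h => (mem_erase.1 (hW h)).1 rfl, by rw [hWcard]; ring, hsum⟩)

lemma hasZeroSumStar_of_even {m t : ℕ} (ht : Even t) (ht0 : 0 < t) (hdvd : t ∣ m)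
    (c : Finset (Fin (m + t - 1)) → ZMod t) : HasZeroSumStar (ZMod t) 2 m (m + t - 1) c := by
  classical
  by_contra hc
  let G := SimpleGraph.fromRel fun v w : Fin (m + t - 1) => Odd (c {v, w}).val
  have hdeg : ∀ v, Odd (G.degree v) := fun v => by
    rw [← SimpleGraph.card_neighborFinset_eq_degree]
    convert odd_card_odd_of_not_hasZeroSumStar ht ht0 hdvd hc v using 2
    ext w
    simp [G, SimpleGraph.neighborFinset_eq_filter, pair_comm w v, ne_comm]
  have hcard := G.even_card_odd_degree_vertices
  rw [filter_true_of_mem fun v _ => hdeg v, card_univ, Fintype.card_fin] at hcard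
  obtain ⟨s, rfl⟩ := ht
  obtain ⟨k, rfl⟩ := hdvd
  obtain ⟨r, hr⟩ := hcard
  ring_nf at hr
  omega

lemma exists_not_hasZeroSumStar_of_isRegularOfDegree {m t D : ℕ} (G : SimpleGraph (Fin D))
    [DecidableRel G.Adj] (hG : G.IsRegularOfDegree (t - 1)) (hD : D ≤ m + t - 1) :
    ∃ c : Finset (Fin D) → ZMod t, ¬ HasZeroSumStar (ZMod t) 2 m D c := by
  classical
  refine ⟨fun e => if ∃ x ∈ e, ∃ y ∈ e, G.Adj x y then 1 else 0, ?_⟩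
  rw [hasZeroSumStar_two_iff]
  rintro ⟨v, W, hvW, hWcard, hsum⟩
  have hcolor : ∀ w, (if ∃ x ∈ ({v, w} : Finset (Fin D)), ∃ y ∈ ({v, w} : Finset (Fin D)),
      G.Adj x y then (1 : ZMod t) else 0) = if G.Adj v w then 1 else 0 := by
    intro w
    simp only [mem_insert, mem_singleton, exists_eq_or_imp, exists_eq_left, G.irrefl,
      false_or, or_false]
    exact if_congr ⟨fun h => h.elim id G.adj_symm, Or.inl⟩ rfl rfl
  rw [sum_congr rfl fun w _ => hcolor w, sum_boole, ZMod.natCast_eq_zero_iff] at hsum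
  have hsub : G.neighborFinset v ⊆ univ.erase v := fun w hw =>
    mem_erase.2 ⟨(G.ne_of_adj ((G.mem_neighborFinset v w).1 hw)).symm, mem_univ w⟩
  have hdeg : #(G.neighborFinset v) = t - 1 := by rw [G.card_neighborFinset_eq_degree, hG v]
  have hdegle : t - 1 ≤ D - 1 := by
    simpa [hdeg] using card_le_card hsub
  have hadj : #{w ∈ W | G.Adj v w} ≤ t - 1 := by
    rw [← hdeg]
    exact card_le_card fun w hw => by simpa using (mem_filter.1 hw).2
  have hnonadj : #{w ∈ W | ¬ G.Adj v w} ≤ D - 1 - (t - 1) := by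
    calc #{w ∈ W | ¬ G.Adj v w} ≤ #(univ.erase v \ G.neighborFinset v) :=
          card_le_card fun w hw => by
            simp only [mem_filter] at hw
            simpa [ne_of_mem_of_not_mem hw.1 hvW] using hw.2
      _ = D - 1 - (t - 1) := by
          rw [card_sdiff_of_subset hsub, card_erase_of_mem (mem_univ v), card_univ,
            Fintype.card_fin, hdeg]
  have hsplit : #{w ∈ W | G.Adj v w} + #{w ∈ W | ¬ G.Adj v w} = m :=
    hWcard ▸ card_filter_add_card_filter_not _
  have hzero : #{w ∈ W | G.Adj v w} = 0 := by
    rcases Nat.eq_zero_or_pos t with rfl | ht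
    · simpa using hsum
    · exact Nat.eq_zero_of_dvd_of_lt hsum (by omega)
  have := v.isLt
  omega

/-- Bialostocki–Dierker–Caro: the value of `R(K_{1,m}, Z_t)`. -/
theorem stmt_12 (m t R : ℕ) (ht : 2 ≤ t) (hmt : t ≤ m) (hdvd : t ∣ m)
    (hR : IsStarRamsey (ZMod t) 2 m R) :
    (Even m ∧ Even t → R = m + t - 1) ∧ (¬ (Even m ∧ Even t) → R = m + t) := by
  by_cases hte : Even t
  · have hme : Even m := even_iff_two_dvd.2 ((even_iff_two_dvd.1 hte).trans hdvd)
    have hD : Even (m + t - 1 - 1) := by rw [Nat.even_iff] at hte hme ⊢; omega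
    obtain ⟨G, _, hG⟩ :=
      SimpleGraph.exists_isRegularOfDegree (k := t - 1) (by omega) (hD.mul_left (t - 1))
    have hN : IsStarRamsey (ZMod t) 2 m (m + t - 1) :=
      isStarRamsey_of_forall_of_exists_not (by omega)
        (hasZeroSumStar_of_even hte (by omega) hdvd)
        (exists_not_hasZeroSumStar_of_isRegularOfDegree G hG (by omega))
    exact ⟨fun _ => IsLeast.unique hR hN, fun h => absurd ⟨hme, hte⟩ h⟩
  · have hk : Even (t - 1) := by rw [Nat.even_iff] at hte ⊢; omega
    obtain ⟨G, _, hG⟩ :=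
      SimpleGraph.exists_isRegularOfDegree (k := t - 1) (D := m + t - 1) (by omega)
        (hk.mul_right _)
    have hN : IsStarRamsey (ZMod t) 2 m (m + t) :=
      isStarRamsey_of_forall_of_exists_not (by omega)
        (hasZeroSumStar_of_add_le (by omega) hdvd le_rfl)
        (exists_not_hasZeroSumStar_of_isRegularOfDegree G hG (by omega))
    exact ⟨fun h => absurd h.2 hte, fun _ => IsLeast.unique hR hN⟩
end

section
/- Let G be a finite abelian group, r ≥ 2, and let m be a positive multiple of exp(G). Suppose r > (Ω(s_m(G)) - 1)/2, where Ω(s_m(G)) is the least n with C(n-1, r-1) ≥ s_m(G). Then R(I_m^{(r)}, G) = Ω(s_m(G)) - 1 if C(Ω(s_m(G)) - 1, r) ≥ s_m(G), and R(I_m^{(r)}, G) = Ω(s_m(G)) otherwise. -/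
open Finset

/-!
Colour the `r`-sets of a `d`-set by `G`. If some family `E` of them has `#E ≥ s_m(G)`, the
colours on `E` form a sequence containing a zero-sum subsequence of length `m`, i.e. `m` edges
of `E` with zero colour sum; if `C(d, r) < s_m(G)`, colouring the edges along a sequence of
length `C(d, r)` without zero-sum `m`-subsequence leaves no zero-sum family at all. Two such families
`E` are intersecting: all `r`-sets when `d < 2r`, and the star at a vertex, of size
`C(d - 1, r - 1)`. Below `n - 1` vertices there are at most `C(n - 2, r) ≤ C(n - 2, r - 1) < s_m(G)`
edges, by `n - 2 < 2r - 1` and the minimality of `n`.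
-/

theorem Multiset.exists_le_map_eq_of_le_map {α β : Type*} {f : α → β} {S : Multiset α}
    {T : Multiset β} (h : T ≤ S.map f) : ∃ S' ≤ S, S'.map f = T := by
  induction S using Quot.inductionOn
  induction T using Quot.inductionOn
  obtain ⟨t, hperm, hsub⟩ := Multiset.coe_le.mp h
  obtain ⟨l, hl, rfl⟩ := List.sublist_map_iff.mp hsub
  exact ⟨l, Multiset.coe_le.mpr hl.subperm, Multiset.coe_eq_coe.mpr hperm⟩

theorem Multiset.exists_le_card_eq {α : Type*} {S : Multiset α} {k : ℕ} (h : k ≤ card S) :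
    ∃ T ≤ S, card T = k := by
  obtain ⟨T, hT⟩ := Multiset.card_pos_iff_exists_mem.mp
    (by rw [Multiset.card_powersetCard]; exact Nat.choose_pos h : 0 < card (S.powersetCard k))
  exact ⟨T, Multiset.mem_powersetCard.mp hT⟩

theorem Finset.exists_val_map_eq {α β : Type*} [DecidableEq α] [Nonempty β] (E : Finset α)
    (B : Multiset β) (h : Multiset.card B = #E) : ∃ c : α → β, E.val.map c = B := by
  induction E using Finset.induction generalizing B with
  | empty => exact ⟨fun _ => Classical.arbitrary β, by simpa [eq_comm] using h⟩
  | insert a E ha ih =>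
    rw [card_insert_of_notMem ha] at h
    obtain ⟨b, hb⟩ := Multiset.card_pos_iff_exists_mem.mp (by omega : 0 < Multiset.card B)
    obtain ⟨B', rfl⟩ := Multiset.exists_cons_of_mem hb
    obtain ⟨c, hc⟩ := ih B' (by simpa using h)
    refine ⟨Function.update c a b, ?_⟩
    rw [insert_val_of_notMem ha, Multiset.map_cons, Function.update_self, ← hc]
    exact congrArg _ <| Multiset.map_congr rfl fun x hx =>
      Function.update_of_ne (by rintro rfl; exact ha hx) _ _

theorem Nat.choose_le_choose_sub_one_of_lt_two_mul {n r : ℕ} (h : n < 2 * r) :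
    n.choose r ≤ n.choose (r - 1) := by
  obtain _ | r := r
  · rfl
  refine Nat.le_of_mul_le_mul_right ?_ r.succ_pos
  rw [Nat.choose_succ_right_eq]
  exact Nat.mul_le_mul_left _ (by omega)

theorem HasZeroSumStar.hasZeroSumIntersecting {G : Type*} [AddCommGroup G] {r m d : ℕ}
    {c : Finset (Fin d) → G} (h : HasZeroSumStar G r m d c) : HasZeroSumIntersecting G r m d c := by
  obtain ⟨v, F, hFm, hF, hF0⟩ := h
  exact ⟨F, hFm, fun e he => (hF e he).1,
    fun e he f hf => ⟨v, mem_inter.mpr ⟨(hF e he).2, (hF f hf).2⟩⟩, hF0⟩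

def HasZeroSumSubseq {G : Type*} [AddCommGroup G] (m : ℕ) (S : Multiset G) : Prop :=
  ∃ T ≤ S, Multiset.card T = m ∧ T.sum = 0

namespace IsEGZConst

variable {G : Type*} [AddCommGroup G] {m s : ℕ}

theorem hasZeroSumSubseq (hs : IsEGZConst G m s) {S : Multiset G}
    (hS : s ≤ Multiset.card S) : HasZeroSumSubseq m S := by
  obtain ⟨S₀, hS₀, hcard⟩ := Multiset.exists_le_card_eq hS
  obtain ⟨T, hT, hTm, hT0⟩ := hs.1.2 S₀ hcard
  exact ⟨T, hT.trans hS₀, hTm, hT0⟩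

theorem exists_not_hasZeroSumSubseq (hs : IsEGZConst G m s) (hm : m ≠ 0) {d : ℕ}
    (hd : d < s) : ∃ S : Multiset G, Multiset.card S = d ∧ ¬ HasZeroSumSubseq m S := by
  rcases Nat.eq_zero_or_pos d with rfl | hd0
  · refine ⟨0, rfl, fun ⟨T, hT, hTm, _⟩ => hm ?_⟩
    rw [← hTm, Multiset.le_zero.mp hT, Multiset.card_zero]
  · by_contra! h
    exact (hs.2 ⟨hd0, h⟩).not_gt hd

theorem exists_subset_card_eq_sum_eq_zero (hs : IsEGZConst G m s) {α : Type*}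
    {E : Finset α} (hE : s ≤ #E) (c : α → G) : ∃ F ⊆ E, #F = m ∧ ∑ e ∈ F, c e = 0 := by
  obtain ⟨T, hT, hTm, hT0⟩ := hs.hasZeroSumSubseq (S := E.val.map c) (by simpa using hE)
  obtain ⟨S, hS, rfl⟩ := Multiset.exists_le_map_eq_of_le_map hT
  exact ⟨⟨S, Multiset.nodup_of_le hS E.nodup⟩, val_le_iff.mp hS, by simpa using hTm, hT0⟩

theorem exists_forall_subset_sum_ne_zero (hs : IsEGZConst G m s) (hm : m ≠ 0) {α : Type*}
    [DecidableEq α] {E : Finset α} (hE : #E < s) :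
    ∃ c : α → G, ∀ F ⊆ E, #F = m → ∑ e ∈ F, c e ≠ 0 := by
  obtain ⟨B, hB, hfree⟩ := hs.exists_not_hasZeroSumSubseq hm hE
  obtain ⟨c, rfl⟩ := E.exists_val_map_eq B hB
  exact ⟨c, fun F hF hFm hF0 =>
    hfree ⟨F.val.map c, Multiset.map_le_map (val_le_iff.mpr hF), by simpa using hFm, hF0⟩⟩

variable {r d : ℕ}

theorem hasZeroSumIntersecting_of_lt_two_mul (hs : IsEGZConst G m s) (hd : d < 2 * r)
    (hsd : s ≤ d.choose r) (c : Finset (Fin d) → G) : HasZeroSumIntersecting G r m d c := by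
  obtain ⟨F, hFE, hFm, hF0⟩ :=
    hs.exists_subset_card_eq_sum_eq_zero (E := powersetCard r univ) (by simpa using hsd) c
  have hcard : ∀ e ∈ F, #e = r := fun e he => (mem_powersetCard.mp (hFE he)).2
  refine ⟨F, hFm, hcard, fun e he f hf => ?_, hF0⟩
  refine inter_nonempty_of_card_lt_card_add_card (subset_univ e) (subset_univ f) ?_
  simp only [card_univ, Fintype.card_fin, hcard e he, hcard f hf]
  omega

theorem hasZeroSumStar (hs : IsEGZConst G m s) (hr : 0 < r) (v : Fin d)
    (hsd : s ≤ (d - 1).choose (r - 1)) (c : Finset (Fin d) → G) :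
    HasZeroSumStar G r m d c := by
  set L := powersetCard (r - 1) (univ.erase v)
  have hvL : ∀ a ∈ L, v ∉ a := fun a ha hva => notMem_erase v univ ((mem_powersetCard.mp ha).1 hva)
  have hcard : #(L.image (insert v)) = (d - 1).choose (r - 1) := by
    rw [card_image_of_injOn, card_powersetCard, card_erase_of_mem (mem_univ v), card_univ,
      Fintype.card_fin]
    intro a ha b hb hab
    simpa only [erase_insert (hvL a ha), erase_insert (hvL b hb)] using congrArg (erase · v) hab
  obtain ⟨F, hFE, hFm, hF0⟩ := hs.exists_subset_card_eq_sum_eq_zero (hsd.trans hcard.ge) c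
  refine ⟨v, F, hFm, fun e he => ?_, hF0⟩
  obtain ⟨a, ha, rfl⟩ := mem_image.mp (hFE he)
  refine ⟨?_, mem_insert_self v a⟩
  rw [card_insert_of_notMem (hvL a ha), (mem_powersetCard.mp ha).2]
  omega

theorem exists_not_hasZeroSumIntersecting (hs : IsEGZConst G m s) (hm : m ≠ 0)
    (hsd : d.choose r < s) : ∃ c, ¬ HasZeroSumIntersecting G r m d c := by
  obtain ⟨c, hc⟩ :=
    hs.exists_forall_subset_sum_ne_zero hm (E := powersetCard r (univ : Finset (Fin d))) (by simpa using hsd)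
  exact ⟨c, fun ⟨F, hFm, hF, _, hF0⟩ =>
    hc F (fun e he => mem_powersetCard.mpr ⟨subset_univ e, hF e he⟩) hFm hF0⟩

end IsEGZConst

theorem IsIntRamsey.eq_of_choose_pred_lt {G : Type*} [AddCommGroup G] {r m s d R : ℕ}
    (hR : IsIntRamsey G r m R) (hs : IsEGZConst G m s) (hm : m ≠ 0) (hd : 0 < d)
    (hall : ∀ c, HasZeroSumIntersecting G r m d c) (hsd : (d - 1).choose r < s) : R = d := by
  refine hR.unique ⟨⟨hd, hall⟩, fun d' ⟨_, hd'⟩ => ?_⟩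
  by_contra! hlt
  obtain ⟨c, hc⟩ := hs.exists_not_hasZeroSumIntersecting hm
    ((Nat.choose_le_choose r (Nat.le_sub_one_of_lt hlt)).trans_lt hsd)
  exact hc (hd' c)

theorem stmt_18_general (G : Type*) [AddCommGroup G] (r m s n RI : ℕ)
    (hr : 2 ≤ r) (hm : 0 < m)
    (hs : IsEGZConst G m s)
    (hn : IsLeast {n : ℕ | 0 < n ∧ s ≤ (n - 1).choose (r - 1)} n)
    (h2r : n - 1 < 2 * r)
    (hRI : IsIntRamsey G r m RI) :
    (s ≤ (n - 1).choose r → RI = n - 1) ∧ (¬ s ≤ (n - 1).choose r → RI = n) := by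
  obtain ⟨⟨hn0, hsn⟩, hn_min⟩ := hn
  have hn2 : 2 ≤ n := by
    by_contra! h
    obtain rfl : n = 1 := by omega
    rw [Nat.sub_self, Nat.choose_eq_zero_of_lt (by omega)] at hsn
    exact hs.1.1.ne' (Nat.le_zero.mp hsn)
  have hs_gt : (n - 1 - 1).choose (r - 1) < s := by
    by_contra! h
    exact absurd (hn_min ⟨by omega, h⟩) (by omega)
  constructor
  · intro hsr
    refine hRI.eq_of_choose_pred_lt hs hm.ne' (by omega)
      (hs.hasZeroSumIntersecting_of_lt_two_mul h2r hsr) ?_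
    exact (Nat.choose_le_choose_sub_one_of_lt_two_mul (by omega)).trans_lt hs_gt
  · intro hsr
    exact hRI.eq_of_choose_pred_lt hs hm.ne' hn0
      (fun c => (hs.hasZeroSumStar (by omega) ⟨0, hn0⟩ hsn c).hasZeroSumIntersecting)
      (not_le.mp hsr)

/-- When `r > (Ω(s_m(G)) - 1)/2`, the value of `R(I_m^{(r)}, G)` is determined by
whether `C(Ω(s_m(G)) - 1, r) ≥ s_m(G)`. -/
theorem stmt_18 (G : Type*) [AddCommGroup G] [Fintype G] (r m s n RI : ℕ)
    (hr : 2 ≤ r) (hm : 0 < m) (hexp : AddMonoid.exponent G ∣ m)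
    (hs : IsEGZConst G m s)
    (hn : IsLeast {n : ℕ | 0 < n ∧ s ≤ (n - 1).choose (r - 1)} n)
    (h2r : n - 1 < 2 * r)
    (hRI : IsIntRamsey G r m RI) :
    (s ≤ (n - 1).choose r → RI = n - 1) ∧ (¬ s ≤ (n - 1).choose r → RI = n) :=
  stmt_18_general G r m s n RI hr hm hs hn h2r hRI
end
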